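/- Let k be even, n a multiple of k, f a skew-symmetric function on [n]^k, and σ a permutation of [n]. Define g(i_1,...,i_k) = f(σ(i_1),...,σ(i_k)). Then g is skew-symmetric and Pf(g) = sgn(σ) · Pf(f). -/

import Mathlib

open Finset Equiv MvPolynomial

open scoped Classical

noncomputable section

/-- The position of the `j`-th element of the `i`-th block. -/
def bpos (m k : ℕ) (i : Fin m) (j : Fin k) : Fin (m * k) :=
  ⟨k * (i : ℕ) + (j : ℕ), by
    have hi := i.isLt
    have hj := j.isLt
    calc k * (i : ℕ) + (j : ℕ) < k * (i : ℕ) + k := by omega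
      _ = k * ((i : ℕ) + 1) := by ring
      _ ≤ k * m := Nat.mul_le_mul_left k hi
      _ = m * k := Nat.mul_comm k m⟩

/-- Each block of the (oriented) partition is listed in increasing order. -/
def IsBlockMono (m k : ℕ) (π : Equiv.Perm (Fin (m * k))) : Prop :=
  ∀ i : Fin m, StrictMono fun j : Fin k => π (bpos m k i j)

/-- The blocks are listed in increasing order of their first elements. -/
def IsLeadMono (m k : ℕ) (π : Equiv.Perm (Fin (m * k))) : Prop :=
  ∀ (i i' : Fin m) (j : Fin k), i < i' →
    π (bpos m k i ⟨0, j.pos⟩) < π (bpos m k i' ⟨0, j.pos⟩)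

/-- Canonical representative of a set partition of `[n]`, `n = m*k`, into `m` blocks of
size `k`: each block increasing and blocks ordered by their minima. -/
def IsPartRep (m k : ℕ) (π : Equiv.Perm (Fin (m * k))) : Prop :=
  IsBlockMono m k π ∧ IsLeadMono m k π

/-- A `k`-ary function is skew-symmetric. -/
def IsSkewFun {k : ℕ} {α R : Type*} [CommRing R] (f : (Fin k → α) → R) : Prop :=
  ∀ (σ : Equiv.Perm (Fin k)) (v : Fin k → α),
    f (v ∘ σ) = (Equiv.Perm.sign σ : ℤ) • f v

/-- The hyperpfaffian of a skew-symmetric `k`-ary function on `[m*k]`: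
the signed sum over all set partitions of `[m*k]` into `m` blocks of size `k`. -/
def hyperPf (m k : ℕ) {R : Type*} [CommRing R]
    (f : (Fin k → Fin (m * k)) → R) : R :=
  ∑ π ∈ Finset.univ.filter (IsPartRep m k),
    (Equiv.Perm.sign π : ℤ) • ∏ i : Fin m, f fun j => π (bpos m k i j)

/-- A polynomial in `k` variables is skew-symmetric. -/
def IsSkewPoly {k : ℕ} {R : Type*} [CommRing R] (f : MvPolynomial (Fin k) R) : Prop :=
  ∀ σ : Equiv.Perm (Fin k),
    MvPolynomial.rename (⇑σ) f = (Equiv.Perm.sign σ : ℤ) • f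

/-- The hyperpfaffian `Pf (f(x_S))` of the values of a polynomial `f` in `k` variables
at the variables indexed by the `k`-subsets `S` of `[m*k]`. -/
def hyperPfPoly (m k : ℕ) {R : Type*} [CommRing R]
    (f : MvPolynomial (Fin k) R) : MvPolynomial (Fin (m * k)) R :=
  ∑ π ∈ Finset.univ.filter (IsPartRep m k),
    (Equiv.Perm.sign π : ℤ) •
      ∏ i : Fin m, MvPolynomial.rename (fun j => π (bpos m k i j)) f

/-- The Vandermonde product. -/
def vand (n : ℕ) (R : Type*) [CommRing R] : MvPolynomial (Fin n) R :=
  ∏ p ∈ Finset.univ.filter (fun p : Fin n × Fin n => p.1 < p.2),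
    (MvPolynomial.X p.2 - MvPolynomial.X p.1)

/-- The coefficient of `f` at the monomial with exponent vector `r`. -/
def coeffOf {k : ℕ} {R : Type*} [CommRing R] (f : MvPolynomial (Fin k) R)
    (r : Fin k → ℕ) : R :=
  MvPolynomial.coeff (Finsupp.equivFunOnFinite.symm r) f

/-- Membership in `Γ_{n,k}`: a strictly increasing composition of `k/2*(n-1)`
into `k` distinct nonnegative parts. -/
def InGamma (n k : ℕ) (r : Fin k → ℕ) : Prop :=
  StrictMono r ∧ ∑ j, r j = k / 2 * (n - 1)

/-- Canonical representative of an element `β` of `R_{n,k}`, encoded as a permutation `e` of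
`Fin (m*k)` (identified with `{0,…,n-1}`): the blocks of `e` are the compositions of `β`,
each block is increasing and sums to `k/2*(n-1)`, and the blocks are ordered canonically. -/
def IsWeightRep (m k : ℕ) (e : Equiv.Perm (Fin (m * k))) : Prop :=
  IsPartRep m k e ∧
    ∀ i : Fin m, ∑ j : Fin k, ((e (bpos m k i j)) : ℕ) = k / 2 * (m * k - 1)

/-- The weight of the element `x` of `[m*k]` in the weighted oriented partition with
oriented partition (representative) `π` and weight vectors `w`. -/
def wtOf (m k : ℕ) (π : Equiv.Perm (Fin (m * k))) (w : Fin m → Fin k → ℕ) :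
    Fin (m * k) → ℕ := fun x =>
  w ⟨((π.symm x : Fin (m*k)) : ℕ) / k, Nat.div_lt_of_lt_mul (lt_of_lt_of_le (π.symm x).isLt (le_of_eq (Nat.mul_comm m k)))⟩
    ⟨((π.symm x : Fin (m*k)) : ℕ) % k, Nat.mod_lt _ (by
      have ht := (π.symm x).isLt
      have hk : k ≠ 0 := by rintro rfl; omega
      omega)⟩

end

/-!
The summand `sign π • ∏ᵢ f(π(block i))` of the hyperpfaffian is unchanged when `π` is
multiplied on the right by a permutation `η` preserving the block structure: reordering inside
block `i` costs a sign by skew-symmetry of `f`, this sign reappears in `sign η`, and permuting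
whole blocks of even size `k` is an even permutation. So the summand is a function on the left
cosets of the block subgroup, and the canonical partition representatives form a transversal.
Replacing `f` by `f ∘ σ` turns the summand at `π` into `sign σ •` the summand at `σ * π`, and
left translation by `σ` permutes the cosets.
-/

theorem Subgroup.IsComplement.sum_mul_left {G M : Type*} [Group G] [Fintype G]
    [AddCommMonoid M] {H : Subgroup G} {S : Finset G} (hS : IsComplement (S : Set G) H)
    {φ : G → M} (hφ : ∀ g, ∀ h ∈ H, φ (g * h) = φ g) (σ : G) :
    ∑ s ∈ S, φ (σ * s) = ∑ s ∈ S, φ s := by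
  let ψ : G ⧸ H → M := Quotient.lift φ fun a b hab => by
    simpa using (hφ a _ (QuotientGroup.leftRel_apply.mp hab)).symm
  have sum_eq : ∀ χ : G ⧸ H → M, ∑ s ∈ S, χ s = ∑ q, χ q := fun χ => by
    rw [← Finset.sum_coe_sort]
    exact Fintype.sum_bijective _ (isComplement_subgroup_right_iff_bijective.mp hS) _ _
      fun _ => rfl
  calc ∑ s ∈ S, φ (σ * s) = ∑ q, ψ (σ • q) := sum_eq fun q => ψ (σ • q)
    _ = ∑ q, ψ q := Equiv.sum_comp (MulAction.toPerm σ) ψ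
    _ = ∑ s ∈ S, φ s := (sum_eq ψ).symm

theorem Equiv.Perm.eq_one_of_strictMono_comp {α : Type*} [LinearOrder α] {n : ℕ}
    {f : Fin n → α} (hf : StrictMono f) {τ : Perm (Fin n)} (hfτ : StrictMono fun i => f (τ i)) :
    τ = 1 :=
  (Equiv.Perm.monotone_iff τ).1 fun _ _ hab => hf.le_iff_le.1 (hfτ.monotone hab)

theorem Tuple.strictMono_comp_sort {α : Type*} [LinearOrder α] {n : ℕ} {f : Fin n → α}
    (hf : Function.Injective f) : StrictMono (f ∘ Tuple.sort f) :=
  (Tuple.monotone_sort f).strictMono_of_injective (hf.comp (Tuple.sort f).injective)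

section BlockPerm

variable {m k : ℕ}

theorem bpos_eq_finProdFinEquiv (i : Fin m) (j : Fin k) :
    bpos m k i j = finProdFinEquiv (i, j) := by
  ext
  simp only [bpos, finProdFinEquiv_apply_val]
  ring

theorem bpos_injective_right (i : Fin m) : Function.Injective (bpos m k i) := by
  intro j j' h
  simpa [bpos_eq_finProdFinEquiv] using h

theorem bpos_injective_left (j : Fin k) : Function.Injective fun i : Fin m => bpos m k i j := by
  intro i i' h
  simpa [bpos_eq_finProdFinEquiv] using h

theorem Equiv.Perm.ext_bpos {π π' : Perm (Fin (m * k))}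
    (h : ∀ i j, π (bpos m k i j) = π' (bpos m k i j)) : π = π' := by
  ext1 x
  obtain ⟨⟨i, j⟩, rfl⟩ := finProdFinEquiv.surjective x
  simpa [bpos_eq_finProdFinEquiv] using h i j

theorem isLeadMono_iff (hk : 0 < k) {π : Perm (Fin (m * k))} :
    IsLeadMono m k π ↔ StrictMono fun i => π (bpos m k i ⟨0, hk⟩) :=
  ⟨fun h _ _ hii' => h _ _ ⟨0, hk⟩ hii', fun h _ _ _ hii' => h hii'⟩

def blockPerm (m k : ℕ) (b : Perm (Fin m)) (w : Fin m → Perm (Fin k)) : Perm (Fin (m * k)) :=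
  finProdFinEquiv.permCongr (b.prodShear w)

@[simp]
theorem blockPerm_apply (b : Perm (Fin m)) (w : Fin m → Perm (Fin k)) (i : Fin m) (j : Fin k) :
    blockPerm m k b w (bpos m k i j) = bpos m k (b i) (w i j) := by
  simp [blockPerm, bpos_eq_finProdFinEquiv, Equiv.permCongr_apply]

theorem blockPerm_mul (b b' : Perm (Fin m)) (w w' : Fin m → Perm (Fin k)) :
    blockPerm m k b w * blockPerm m k b' w' = blockPerm m k (b * b') fun i => w (b' i) * w' i :=
  Equiv.Perm.ext_bpos fun _ _ => by simp

theorem blockPerm_one : blockPerm m k 1 1 = 1 :=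
  Equiv.Perm.ext_bpos fun _ _ => by simp

theorem blockPerm_inv (b : Perm (Fin m)) (w : Fin m → Perm (Fin k)) :
    (blockPerm m k b w)⁻¹ = blockPerm m k b⁻¹ fun i => (w (b⁻¹ i))⁻¹ := by
  rw [inv_eq_iff_mul_eq_one, blockPerm_mul]
  simpa [← Pi.one_def] using blockPerm_one

theorem sign_blockPerm (hk : Even k) (b : Perm (Fin m)) (w : Fin m → Perm (Fin k)) :
    Perm.sign (blockPerm m k b w) = ∏ i, Perm.sign (w i) := by
  have hshear : b.prodShear w = prodCongrLeft (fun _ => b) * prodCongrRight w := by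
    ext ⟨i, j⟩ <;> rfl
  rw [blockPerm, Perm.sign_permCongr, hshear, map_mul, Perm.sign_prodCongrLeft,
    Perm.sign_prodCongrRight, prod_const, card_univ, Fintype.card_fin]
  obtain ⟨c, hc⟩ := hk
  have hb : Perm.sign b ^ k = 1 := by rw [hc, ← two_mul, pow_mul, Int.units_sq, one_pow]
  rw [hb, one_mul]

theorem mul_blockPerm_apply (π : Perm (Fin (m * k))) (b : Perm (Fin m))
    (w : Fin m → Perm (Fin k)) (i : Fin m) (j : Fin k) :
    (π * blockPerm m k b w) (bpos m k i j) = π (bpos m k (b i) (w i j)) := by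
  rw [Perm.mul_apply, blockPerm_apply]

def blockSubgroup (m k : ℕ) : Subgroup (Perm (Fin (m * k))) where
  carrier := {η | ∃ b w, blockPerm m k b w = η}
  mul_mem' := by
    rintro _ _ ⟨b, w, rfl⟩ ⟨b', w', rfl⟩
    exact ⟨_, _, (blockPerm_mul b b' w w').symm⟩
  one_mem' := ⟨1, 1, blockPerm_one⟩
  inv_mem' := by
    rintro _ ⟨b, w, rfl⟩
    exact ⟨_, _, (blockPerm_inv b w).symm⟩

theorem exists_isBlockMono_mul (π : Perm (Fin (m * k))) :
    ∃ η ∈ blockSubgroup m k, IsBlockMono m k (π * η) :=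
  ⟨blockPerm m k 1 fun i => Tuple.sort (π ∘ bpos m k i), ⟨_, _, rfl⟩, fun i => by
    simp only [mul_blockPerm_apply, Perm.one_apply]
    exact Tuple.strictMono_comp_sort (π.injective.comp (bpos_injective_right i))⟩

theorem IsBlockMono.exists_isPartRep_mul (hk : 0 < k) {π : Perm (Fin (m * k))}
    (hπ : IsBlockMono m k π) : ∃ η ∈ blockSubgroup m k, IsPartRep m k (π * η) := by
  refine ⟨blockPerm m k (Tuple.sort fun i => π (bpos m k i ⟨0, hk⟩)) 1, ⟨_, _, rfl⟩,
    fun i => ?_, (isLeadMono_iff hk).2 ?_⟩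
  · simpa only [mul_blockPerm_apply, Pi.one_apply, Perm.one_apply] using hπ _
  · simp only [mul_blockPerm_apply, Pi.one_apply, Perm.one_apply]
    exact Tuple.strictMono_comp_sort (π.injective.comp (bpos_injective_left ⟨0, hk⟩))

theorem exists_isPartRep_mul (hk : 0 < k) (π : Perm (Fin (m * k))) :
    ∃ η ∈ blockSubgroup m k, IsPartRep m k (π * η) := by
  obtain ⟨η, hη, hmono⟩ := exists_isBlockMono_mul π
  obtain ⟨η', hη', hrep⟩ := hmono.exists_isPartRep_mul hk
  exact ⟨η * η', mul_mem hη hη', by rwa [← mul_assoc]⟩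

theorem IsPartRep.eq_of_inv_mul_mem (hk : 0 < k) {r r' : Perm (Fin (m * k))}
    (hr : IsPartRep m k r) (hr' : IsPartRep m k r') (h : r⁻¹ * r' ∈ blockSubgroup m k) :
    r' = r := by
  obtain ⟨b, w, hbw⟩ := h
  obtain rfl : r' = r * blockPerm m k b w := by rw [hbw]; group
  obtain rfl : w = 1 := funext fun i => Perm.eq_one_of_strictMono_comp (hr.1 (b i)) <| by
    simpa only [mul_blockPerm_apply] using hr'.1 i
  obtain rfl : b = 1 := Perm.eq_one_of_strictMono_comp ((isLeadMono_iff hk).1 hr.2) <| by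
    simpa only [mul_blockPerm_apply, Pi.one_apply, Perm.one_apply] using
      (isLeadMono_iff hk).1 hr'.2
  rw [blockPerm_one, mul_one]

theorem isComplement_isPartRep (hk : 0 < k) :
    Subgroup.IsComplement (↑(univ.filter (IsPartRep m k)) : Set (Perm (Fin (m * k))))
      (blockSubgroup m k) := by
  rw [Subgroup.isComplement_iff_existsUnique_inv_mul_mem]
  intro π
  obtain ⟨η, hη, hrep⟩ := exists_isPartRep_mul hk π
  refine ⟨⟨π * η, by simpa using hrep⟩, by simpa using inv_mem hη, ?_⟩
  rintro ⟨r, hr⟩ hrπ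
  refine Subtype.ext (hrep.eq_of_inv_mul_mem hk (by simpa using hr) ?_)
  simpa [mul_assoc] using mul_mem (inv_mem hη) (inv_mem hrπ)

end BlockPerm

section Term

variable {m k : ℕ} {R : Type*} [CommRing R]

def hyperPfTerm (m k : ℕ) (f : (Fin k → Fin (m * k)) → R) (π : Perm (Fin (m * k))) : R :=
  (Perm.sign π : ℤ) • ∏ i : Fin m, f fun j => π (bpos m k i j)

theorem hyperPf_eq_sum_hyperPfTerm (f : (Fin k → Fin (m * k)) → R) :
    hyperPf m k f = ∑ π ∈ univ.filter (IsPartRep m k), hyperPfTerm m k f π :=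
  rfl

theorem hyperPfTerm_mul_blockPerm (hk : Even k) {f : (Fin k → Fin (m * k)) → R}
    (hf : IsSkewFun f) (π : Perm (Fin (m * k))) (b : Perm (Fin m))
    (w : Fin m → Perm (Fin k)) :
    hyperPfTerm m k f (π * blockPerm m k b w) = hyperPfTerm m k f π := by
  set ε : Fin m → R := fun i => ((Perm.sign (w i) : ℤ) : R)
  have hblock : ∀ i, f (fun j => π (bpos m k (b i) (w i j)))
      = ε i * f fun j => π (bpos m k (b i) j) := fun i => by
    rw [← zsmul_eq_mul]
    exact hf (w i) fun j => π (bpos m k (b i) j)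
  have hε : (∏ i, ε i) ^ 2 = 1 := by
    rw [← prod_pow]
    refine prod_eq_one fun i _ => ?_
    rw [← Int.cast_pow, ← Units.val_pow_eq_pow_val, Int.units_sq, Units.val_one, Int.cast_one]
  simp only [hyperPfTerm, mul_blockPerm_apply, hblock, prod_mul_distrib, map_mul,
    sign_blockPerm hk, zsmul_eq_mul, Units.coe_prod, Units.val_mul, Int.cast_mul, Int.cast_prod]
  rw [Equiv.prod_comp b fun i => f fun j => π (bpos m k i j)]
  linear_combination (((Perm.sign π : ℤ) : R) * ∏ i, f fun j => π (bpos m k i j)) * hε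

theorem hyperPfTerm_comp (f : (Fin k → Fin (m * k)) → R) (σ π : Perm (Fin (m * k))) :
    hyperPfTerm m k (fun v => f (⇑σ ∘ v)) π = (Perm.sign σ : ℤ) • hyperPfTerm m k f (σ * π) := by
  rw [hyperPfTerm, hyperPfTerm, smul_smul, map_mul, Units.val_mul, ← mul_assoc,
    ← Units.val_mul, Int.units_mul_self, Units.val_one, one_mul]
  rfl

end Term

theorem stmt1 (m k : ℕ) (hk : Even k) {R : Type*} [CommRing R]
    (f : (Fin k → Fin (m * k)) → R) (hf : IsSkewFun f)
    (σ : Equiv.Perm (Fin (m * k))) :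
    IsSkewFun (fun v : Fin k → Fin (m * k) => f (⇑σ ∘ v)) ∧
      hyperPf m k (fun v => f (⇑σ ∘ v))
        = (Equiv.Perm.sign σ : ℤ) • hyperPf m k f := by
  refine ⟨fun τ v => hf τ (⇑σ ∘ v), ?_⟩
  obtain rfl | hk0 := k.eq_zero_or_pos
  · simp [show σ = 1 from Equiv.ext fun x => x.elim0]
  have hinv : ∀ π, ∀ η ∈ blockSubgroup m k, hyperPfTerm m k f (π * η) = hyperPfTerm m k f π := by
    rintro π _ ⟨b, w, rfl⟩
    exact hyperPfTerm_mul_blockPerm hk hf π b w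
  simp only [hyperPf_eq_sum_hyperPfTerm, hyperPfTerm_comp, ← smul_sum,
    (isComplement_isPartRep hk0).sum_mul_left hinv]
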